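/- Let f and v2222 be nonnegative integers with f ≥ 5 and v2222 ≥ 1. Define the polynomial H₂₅(t) = (v2222 − 1)·t⁶ + (v2222 + f − 5)·t⁵ + (v2222 + f − 5)·t⁴ + (v2222 + f − 5)·t³ + (v2222 + f − 5)·t² + (f − 5)·t − 1 with integer coefficients. Then all coefficients of H₂₅ in degrees 1 through 6 are nonnegative, the coefficients of t², t³, t⁴, t⁵ are strictly positive, and there exists a real number r0 with 0 < r0 < 1 such that H₂₅(r0) = 0, every complex root z of H₂₅ with z ≠ r0 satisfies |z| > r0, and 1/r0 is a Perron number. -/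

import Mathlib

/-!
Write `H₂₅ = q - 1`, where `q` has nonnegative coefficients, positive in the consecutive degrees
`2` and `3`. Since `H₂₅(0) = -1 < 0 < H₂₅(1)`, there is a root `r₀ ∈ (0, 1)`. A root `z` with
`|z| ≤ r₀` would give `1 = Re q(z) ≤ q(|z|) ≤ q(r₀) = 1`; termwise equality forces `z² = r₀²` and
`z³ = r₀³`, hence `z = r₀`. As `H₂₅(0) = -1`, the reversal of `-H₂₅` is a monic integer polynomial
vanishing at `1 / r₀` whose nonzero roots are the reciprocals of the roots of `H₂₅`; the minimal
polynomial of `1 / r₀` divides it, so every other conjugate has modulus less than `1 / r₀`.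
-/

open Polynomial

/-- A *Perron number* is a real algebraic integer `τ > 1` such that every complex root of the
minimal polynomial of `τ` over `ℚ` other than `τ` itself has absolute value strictly less
than `τ`. -/
def IsPerronNumber (τ : ℝ) : Prop :=
  1 < τ ∧ IsIntegral ℤ τ ∧
    ∀ z : ℂ, aeval z (minpoly ℚ τ) = 0 → z ≠ (τ : ℂ) → ‖z‖ < τ

open scoped ComplexOrder in
lemma Complex.eq_ofReal_of_re_eq_of_norm_le {w : ℂ} {c : ℝ} (hre : w.re = c) (hle : ‖w‖ ≤ c) :
    w = c := by
  have hnonneg : 0 ≤ w := Complex.re_eq_norm.1 (le_antisymm (Complex.re_le_norm w) (hre ▸ hle))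
  rw [Complex.eq_re_of_ofReal_le hnonneg, hre]

theorem lt_norm_of_aeval_eq_zero_of_coeff_nonneg {p : ℝ[X]}
    (hnonneg : ∀ k, 1 ≤ k → 0 ≤ p.coeff k) {n : ℕ} (hn : 0 < p.coeff n)
    (hn1 : 0 < p.coeff (n + 1)) {r : ℝ} (hr : 0 < r) (hpr : p.eval r = 0) {z : ℂ}
    (hz : aeval z p = 0) (hzr : z ≠ r) : r < ‖z‖ := by
  by_contra! hle
  have hterm : ∀ k, 0 ≤ p.coeff k * (r ^ k - (z ^ k).re) := by
    rintro (_ | k)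
    · simp
    · refine mul_nonneg (hnonneg _ k.succ_pos) (sub_nonneg.2 ?_)
      calc (z ^ (k + 1)).re ≤ ‖z‖ ^ (k + 1) := norm_pow z _ ▸ Complex.re_le_norm _
        _ ≤ r ^ (k + 1) := by gcongr
  have hsum : ∑ k ∈ Finset.range (p.natDegree + 1), p.coeff k * (r ^ k - (z ^ k).re) = 0 := by
    have hre := congrArg Complex.re (aeval_eq_sum_range (p := p) z)
    simp only [hz, Complex.zero_re, Complex.re_sum, Complex.real_smul, Complex.re_ofReal_mul] at hre
    simp only [mul_sub, Finset.sum_sub_distrib, ← eval_eq_sum_range, hpr, ← hre, sub_zero]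
  have hpow : ∀ k, 0 < p.coeff k → z ^ k = (r : ℂ) ^ k := by
    intro k hk
    have hmem : k ∈ Finset.range (p.natDegree + 1) :=
      Finset.mem_range_succ_iff.2 (le_natDegree_of_ne_zero hk.ne')
    have hre : (z ^ k).re = r ^ k := by
      have := (Finset.sum_eq_zero_iff_of_nonneg (fun k _ => hterm k)).1 hsum k hmem
      rw [mul_eq_zero, sub_eq_zero] at this
      exact (this.resolve_left hk.ne').symm
    rw [← Complex.ofReal_pow]
    refine Complex.eq_ofReal_of_re_eq_of_norm_le hre ?_
    rw [norm_pow]; gcongr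
  have hrn : (r : ℂ) ^ n ≠ 0 := pow_ne_zero _ (Complex.ofReal_ne_zero.2 hr.ne')
  refine hzr (mul_left_cancel₀ hrn ?_)
  calc (r : ℂ) ^ n * z = z ^ n * z := by rw [hpow n hn]
    _ = r ^ n * r := by rw [← pow_succ, hpow _ hn1, pow_succ]

lemma monic_neg_reverse {p : ℤ[X]} (h0 : p.coeff 0 = -1) : (-p.reverse).Monic := by
  rw [Monic, leadingCoeff_neg, reverse_leadingCoeff, trailingCoeff_eq_coeff_zero (by simp [h0]),
    h0, neg_neg]

lemma aeval_inv_reverse_eq_zero_iff {R S : Type*} [CommSemiring R] [Semifield S] [Algebra R S]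
    {p : R[X]} {x : S} (hx : x ≠ 0) : aeval x⁻¹ p.reverse = 0 ↔ aeval x p = 0 := by
  let := invertibleOfNonzero hx
  simpa only [aeval_def, invOf_eq_inv] using eval₂_reverse_eq_zero_iff (algebraMap R S) x p

theorem isPerronNumber_inv_of_lt_norm {p : ℤ[X]} (h0 : p.coeff 0 = -1) {r : ℝ} (hr0 : 0 < r)
    (hr1 : r < 1) (hpr : aeval r p = 0)
    (hdom : ∀ z : ℂ, aeval z p = 0 → z ≠ r → r < ‖z‖) : IsPerronNumber (1 / r) := by
  rw [one_div]
  have hrev : aeval r⁻¹ p.reverse = 0 := (aeval_inv_reverse_eq_zero_iff hr0.ne').2 hpr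
  refine ⟨one_lt_inv_iff₀.2 ⟨hr0, hr1⟩, ⟨-p.reverse, monic_neg_reverse h0, ?_⟩, ?_⟩
  · rw [← aeval_def, map_neg, hrev, neg_zero]
  intro z hz hzr
  rcases eq_or_ne z 0 with rfl | hz0
  · simpa using hr0
  have hzrev : aeval z p.reverse = 0 := by
    rw [← aeval_map_algebraMap ℚ] at hrev ⊢
    exact aeval_eq_zero_of_dvd_aeval_eq_zero (minpoly.dvd ℚ _ hrev) hz
  have hinv := hdom z⁻¹ ((aeval_inv_reverse_eq_zero_iff (inv_ne_zero hz0)).1 (by rwa [inv_inv]))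
    (fun h => hzr (by rw [← inv_inv z, h, Complex.ofReal_inv]))
  rw [norm_inv] at hinv
  exact (lt_inv_comm₀ hr0 (norm_pos_iff.2 hz0)).1 hinv

noncomputable def H25 (f v2222 : ℕ) : ℤ[X] :=
  C ((v2222 : ℤ) - 1) * X ^ 6
    + C ((v2222 : ℤ) + f - 5) * X ^ 5
    + C ((v2222 : ℤ) + f - 5) * X ^ 4
    + C ((v2222 : ℤ) + f - 5) * X ^ 3
    + C ((v2222 : ℤ) + f - 5) * X ^ 2
    + C ((f : ℤ) - 5) * X - 1

section H25

variable {f v2222 : ℕ}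

lemma coeff_H25_zero : (H25 f v2222).coeff 0 = -1 := by
  simp [H25]

lemma natDegree_H25_le : (H25 f v2222).natDegree ≤ 6 := by
  unfold H25; compute_degree

lemma coeff_H25_nonneg (hf : 5 ≤ f) (hv : 1 ≤ v2222) (k : ℕ) (hk : 1 ≤ k) :
    0 ≤ (H25 f v2222).coeff k := by
  rcases le_or_gt k 6 with hk6 | hk6
  · interval_cases k <;>
      simp only [H25, coeff_sub, coeff_add, coeff_C_mul, coeff_X_pow, coeff_X, coeff_one] <;>
      norm_num <;> omega
  · rw [coeff_eq_zero_of_natDegree_lt (natDegree_H25_le.trans_lt hk6)]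

lemma coeff_H25_pos (hf : 5 ≤ f) (hv : 1 ≤ v2222) (k : ℕ) (hk2 : 2 ≤ k) (hk5 : k ≤ 5) :
    0 < (H25 f v2222).coeff k := by
  interval_cases k <;>
    simp only [H25, coeff_sub, coeff_add, coeff_C_mul, coeff_X_pow, coeff_X, coeff_one] <;>
    norm_num <;> omega

lemma exists_mem_Ioo_aeval_H25_eq_zero (hf : 5 ≤ f) (hv : 1 ≤ v2222) :
    ∃ r ∈ Set.Ioo (0 : ℝ) 1, aeval r (H25 f v2222) = 0 := by
  have hvR : (1 : ℝ) ≤ v2222 := by exact_mod_cast hv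
  have hfR : (5 : ℝ) ≤ f := by exact_mod_cast hf
  refine intermediate_value_Ioo zero_le_one (H25 f v2222).continuous_aeval.continuousOn ⟨?_, ?_⟩
  · simp [H25]
  · simp only [H25, map_add, map_sub, map_mul, map_pow, aeval_X, map_one, map_natCast, map_ofNat]
    linarith

lemma lt_norm_of_aeval_H25_eq_zero (hf : 5 ≤ f) (hv : 1 ≤ v2222) {r : ℝ} (hr : 0 < r)
    (hHr : aeval r (H25 f v2222) = 0) {z : ℂ} (hz : aeval z (H25 f v2222) = 0) (hzr : z ≠ r) :
    r < ‖z‖ := by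
  refine lt_norm_of_aeval_eq_zero_of_coeff_nonneg (p := (H25 f v2222).map (algebraMap ℤ ℝ))
    (n := 2) (fun k hk => ?_) ?_ ?_ hr (by rwa [eval_map_algebraMap])
    (by rwa [aeval_map_algebraMap]) hzr <;> rw [coeff_map, eq_intCast]
  · exact Int.cast_nonneg (coeff_H25_nonneg hf hv k hk)
  · exact Int.cast_pos.2 (coeff_H25_pos hf hv 2 le_rfl (by norm_num))
  · exact Int.cast_pos.2 (coeff_H25_pos hf hv 3 (by norm_num) (by norm_num))

end H25

/-- the denominator polynomial `H₂₅` for non-compact hyperbolic Coxeter polyhedra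
with dihedral angles `π/2` and `π/5` and exactly one `π/5`-edge: its coefficients are
nonnegative in degrees `1`–`6`, positive in degrees `2`–`5`, and it has a root `r0 ∈ (0,1)`
smaller in absolute value than all other complex roots, with `1/r0` a Perron number. -/
theorem H25_growth_rate_isPerronNumber
    (f v2222 : ℕ) (hf : 5 ≤ f) (hv : 1 ≤ v2222)
    (H : Polynomial ℤ)
    (hH : H = C ((v2222 : ℤ) - 1) * X ^ 6
        + C ((v2222 : ℤ) + f - 5) * X ^ 5
        + C ((v2222 : ℤ) + f - 5) * X ^ 4
        + C ((v2222 : ℤ) + f - 5) * X ^ 3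
        + C ((v2222 : ℤ) + f - 5) * X ^ 2
        + C ((f : ℤ) - 5) * X - 1) :
    (∀ k : ℕ, 1 ≤ k → 0 ≤ H.coeff k) ∧
    (∀ k : ℕ, 2 ≤ k → k ≤ 5 → 0 < H.coeff k) ∧
    ∃ r0 : ℝ, 0 < r0 ∧ r0 < 1 ∧ aeval r0 H = 0 ∧
      (∀ z : ℂ, aeval z H = 0 → z ≠ (r0 : ℂ) → (r0 : ℝ) < ‖z‖) ∧
      IsPerronNumber (1 / r0) := by
  obtain rfl : H = H25 f v2222 := hH
  obtain ⟨r0, ⟨hr0, hr1⟩, hroot⟩ := exists_mem_Ioo_aeval_H25_eq_zero hf hv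
  have hdom : ∀ z : ℂ, aeval z (H25 f v2222) = 0 → z ≠ r0 → r0 < ‖z‖ :=
    fun _ hz hzr => lt_norm_of_aeval_H25_eq_zero hf hv hr0 hroot hz hzr
  exact ⟨coeff_H25_nonneg hf hv, coeff_H25_pos hf hv, r0, hr0, hr1, hroot, hdom,
    isPerronNumber_inv_of_lt_norm coeff_H25_zero hr0 hr1 hroot hdom⟩
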